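/- arXiv:2507.14458 — 2 statements merged into one kernel-verified Lean document; each statement's English description precedes it below -/
import Mathlib

section
/- For every n ∈ ℕ with n ≥ 1, the complex numbers λ_j = 1 - e^{2πij/(n+1)} (j = 1, ..., n) satisfy ∑_j λ_j = C(n+1,1), ∑_{i<j} λ_i λ_j = C(n+1,2), and more generally the k-th elementary symmetric polynomial e_k(λ_1,...,λ_n) = C(n+1,k) for all 1 ≤ k ≤ n. -/
open Finset Complex

open Polynomial

set_option maxRecDepth 4000

/-- For `λ_j = 1 - e^{2πij/(n+1)}`, `j = 1, ..., n`, the `k`-th elementary symmetric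
polynomial of the `λ_j` equals the binomial coefficient `C(n+1,k)` for `1 ≤ k ≤ n`. -/
theorem esymm_of_lambda_roots (n : ℕ) (hn : 1 ≤ n) (k : ℕ) (hk1 : 1 ≤ k) (hk : k ≤ n) :
    (((Finset.Icc 1 n).val.map
        (fun j : ℕ => 1 - Complex.exp (2 * Real.pi * Complex.I * j / (n + 1)))).esymm k)
      = ((n + 1).choose k : ℂ) := by
  set ζ : ℂ := Complex.exp (2 * Real.pi * Complex.I / (n + 1)) with hζdef
  have hζ : IsPrimitiveRoot ζ (n + 1) := by
    rw [hζdef, show ((n : ℂ) + 1) = ((n + 1 : ℕ) : ℂ) by push_cast; ring]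
    exact Complex.isPrimitiveRoot_exp _ (Nat.succ_ne_zero n)
  have hpow : ∀ j : ℕ, ζ ^ j = Complex.exp (2 * Real.pi * Complex.I * j / (n + 1)) := by
    intro j
    rw [hζdef, ← Complex.exp_nat_mul]
    ring_nf
  set f : ℕ → ℂ := fun j : ℕ => 1 - Complex.exp (2 * Real.pi * Complex.I * j / (n + 1)) with hf
  have hf' : ∀ j : ℕ, f j = 1 - ζ ^ j := by intro j; rw [hf]; simp [hpow]
  -- factorization of X^(n+1) - 1
  have hfact0 : (X : ℂ[X]) ^ (n + 1) - C 1 = ∏ i ∈ Finset.range (n + 1), (X - C (ζ ^ i * 1)) :=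
    X_pow_sub_C_eq_prod hζ (Nat.succ_pos n) (one_pow (n + 1))
  simp only [mul_one] at hfact0
  -- compose with (1 - X)
  have hcomp : ((1 : ℂ[X]) - X) ^ (n + 1) - 1
      = ∏ i ∈ Finset.range (n + 1), ((1 : ℂ[X]) - X - C (ζ ^ i)) := by
    have := congrArg (fun p : ℂ[X] => p.comp (1 - X)) hfact0
    simpa [sub_comp, pow_comp, one_comp, Polynomial.prod_comp, X_comp, C_comp] using this
  have hsign : ∀ i ∈ Finset.range (n + 1),
      (1 : ℂ[X]) - X - C (ζ ^ i) = -(X - C (1 - ζ ^ i)) := by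
    intro i _; rw [C_sub, C_1]; ring
  have hcomp2 : ((1 : ℂ[X]) - X) ^ (n + 1) - 1
      = (-1) ^ (n + 1) * ∏ i ∈ Finset.range (n + 1), (X - C (1 - ζ ^ i)) := by
    rw [hcomp, Finset.prod_congr rfl hsign]
    rw [Finset.prod_congr rfl (fun i _ => (neg_one_mul ((X : ℂ[X]) - C (1 - ζ ^ i))).symm),
      Finset.prod_mul_distrib, Finset.prod_const, Finset.card_range]
  -- split off the i = 0 factor
  have hsplit : Finset.range (n + 1) = insert 0 (Finset.Icc 1 n) := by
    ext x; simp [Nat.lt_succ_iff]; omega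
  set Q : ℂ[X] := ∏ j ∈ Finset.Icc 1 n, (X - C (1 - ζ ^ j)) with hQ
  have hprod : ∏ i ∈ Finset.range (n + 1), (X - C (1 - ζ ^ i)) = X * Q := by
    rw [hsplit, Finset.prod_insert (by simp), pow_zero, sub_self, map_zero, sub_zero]
  have key : ((1 : ℂ[X]) - X) ^ (n + 1) - 1 = (-1) ^ (n + 1) * (X * Q) := by
    rw [hcomp2, hprod]
  -- the multiset
  set s : Multiset ℂ := (Finset.Icc 1 n).val.map f with hs
  have hcard : Multiset.card s = n := by simp [hs, Nat.card_Icc]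
  have hQs : Q = (s.map fun t => X - C t).prod := by
    rw [hQ, hs, Multiset.map_map]
    simp_rw [Function.comp, hf']
    rfl
  -- coefficient extraction
  have hQcoeff : Q.coeff (n - k) = (-1) ^ k * s.esymm k := by
    rw [hQs]
    have h1 : n - k ≤ Multiset.card s := by rw [hcard]; omega
    rw [Multiset.prod_X_sub_C_coeff s h1, hcard, Nat.sub_sub_self hk]
  have hXQ : ((X : ℂ[X]) * Q).coeff (n + 1 - k) = Q.coeff (n - k) := by
    have h2 : n + 1 - k = (n - k) + 1 := by omega
    rw [h2, coeff_X_mul]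
  -- LHS coefficient
  have hL : (((1 : ℂ[X]) - X) ^ (n + 1) - 1).coeff (n + 1 - k)
      = (-1) ^ (n + 1) * ((-1) ^ k * ((n + 1).choose k : ℂ)) := by
    have h1x : ((1 : ℂ[X]) - X) ^ (n + 1) = C ((-1 : ℂ) ^ (n + 1)) * (X + C (-1)) ^ (n + 1) := by
      rw [C_pow, ← mul_pow]
      congr 1
      rw [C_neg, C_1]
      ring
    have hc1 : ((1 : ℂ[X])).coeff (n + 1 - k) = 0 := by
      rw [coeff_one]
      simp only [if_neg (by omega : ¬ (n + 1 - k = 0))]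
    rw [coeff_sub, h1x, coeff_C_mul, coeff_X_add_C_pow, hc1, sub_zero]
    have hk' : n + 1 - (n + 1 - k) = k := by omega
    have hch : (n + 1).choose (n + 1 - k) = (n + 1).choose k :=
      Nat.choose_symm (by omega : k ≤ n + 1)
    rw [hk', hch]
  -- conclude
  have hR : ((-1 : ℂ[X]) ^ (n + 1) * ((X : ℂ[X]) * Q)).coeff (n + 1 - k)
      = (-1) ^ (n + 1) * ((-1) ^ k * s.esymm k) := by
    rw [show ((-1 : ℂ[X]) ^ (n + 1)) = C ((-1 : ℂ) ^ (n + 1)) by simp,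
      coeff_C_mul, hXQ, hQcoeff]
  have heq : (-1 : ℂ) ^ (n + 1) * ((-1) ^ k * ((n + 1).choose k : ℂ))
      = (-1) ^ (n + 1) * ((-1) ^ k * s.esymm k) := by
    rw [← hL, ← hR, key]
  have h1 := mul_left_cancel₀ (pow_ne_zero (n + 1) (by norm_num : (-1 : ℂ) ≠ 0)) heq
  have h2 := mul_left_cancel₀ (pow_ne_zero k (by norm_num : (-1 : ℂ) ≠ 0)) h1
  exact h2.symm
end

section
/- For n = 2, q ≥ 0, B ≥ 1, with λ₁ = (3 - i√3)/2 and λ₂ = (3 + i√3)/2, the sum ∑_{k₁+k₂=q, k₁,k₂≥0} C(k₁λ₁ + k₂λ₂ + 2 + B, 2) of generalized binomial coefficients equals ((q+1)/2)·(B² + 3(q+1)B + 2(q+1)²); in particular this sum is a nonnegative integer. -/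
open Finset Complex

lemma sumC1 (n : ℕ) : ∑ k ∈ Finset.range (n + 1), (k : ℂ) = n * (n + 1) / 2 := by
  induction n with
  | zero => simp
  | succ n ih => rw [Finset.sum_range_succ, ih]; push_cast; ring

lemma sumC2 (n : ℕ) :
    ∑ k ∈ Finset.range (n + 1), (k : ℂ) ^ 2 = n * (n + 1) * (2 * n + 1) / 6 := by
  induction n with
  | zero => simp
  | succ n ih => rw [Finset.sum_range_succ, ih]; push_cast; ring

/-- With `λ₁ = (3 - i√3)/2`, `λ₂ = (3 + i√3)/2`, the sum
`∑_{k₁+k₂=q} C(k₁λ₁ + k₂λ₂ + 2 + B, 2)` of generalized binomial coefficients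
(`C(a,2) = a(a-1)/2`) equals `((q+1)/2)(B² + 3(q+1)B + 2(q+1)²)`; in particular
the sum is a nonnegative integer. -/
theorem sum_generalized_binomial_P2 (q B : ℕ) (hB : 1 ≤ B) :
    (∑ k₁ ∈ Finset.range (q + 1),
        (((k₁ : ℂ) * ((3 - Real.sqrt 3 * Complex.I) / 2)
            + ((q - k₁ : ℕ) : ℂ) * ((3 + Real.sqrt 3 * Complex.I) / 2) + 2 + (B : ℂ))
          * (((k₁ : ℂ) * ((3 - Real.sqrt 3 * Complex.I) / 2)
              + ((q - k₁ : ℕ) : ℂ) * ((3 + Real.sqrt 3 * Complex.I) / 2) + 2 + (B : ℂ))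
            - 1) / 2))
      = ((q : ℂ) + 1) / 2
          * ((B : ℂ) ^ 2 + 3 * ((q : ℂ) + 1) * (B : ℂ) + 2 * ((q : ℂ) + 1) ^ 2)
    ∧ ∃ m : ℕ,
        (∑ k₁ ∈ Finset.range (q + 1),
            (((k₁ : ℂ) * ((3 - Real.sqrt 3 * Complex.I) / 2)
                + ((q - k₁ : ℕ) : ℂ) * ((3 + Real.sqrt 3 * Complex.I) / 2) + 2 + (B : ℂ))
              * (((k₁ : ℂ) * ((3 - Real.sqrt 3 * Complex.I) / 2)
                  + ((q - k₁ : ℕ) : ℂ) * ((3 + Real.sqrt 3 * Complex.I) / 2) + 2 + (B : ℂ))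
                - 1) / 2)) = (m : ℂ) := by
  set t : ℂ := (Real.sqrt 3 : ℂ) * Complex.I with ht_def
  have ht : t ^ 2 = -3 := by
    have h3 : (Real.sqrt 3 : ℝ) ^ 2 = 3 := Real.sq_sqrt (by norm_num)
    calc t ^ 2 = ((Real.sqrt 3 ^ 2 : ℝ) : ℂ) * Complex.I ^ 2 := by push_cast [ht_def]; ring
    _ = -3 := by rw [h3, Complex.I_sq]; norm_num
  set W : ℂ := (q : ℂ) * ((3 + t) / 2) + 2 + (B : ℂ) with hW_def
  have hterm : ∀ k ∈ Finset.range (q + 1),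
      (((k : ℂ) * ((3 - t) / 2) + ((q - k : ℕ) : ℂ) * ((3 + t) / 2) + 2 + (B : ℂ))
        * (((k : ℂ) * ((3 - t) / 2) + ((q - k : ℕ) : ℂ) * ((3 + t) / 2) + 2 + (B : ℂ)) - 1) / 2)
      = (W ^ 2 - W) / 2 + (-(t * (2 * W - 1)) / 2) * (k : ℂ) + (t ^ 2 / 2) * (k : ℂ) ^ 2 := by
    intro k hk
    have hkq : k ≤ q := Nat.lt_succ_iff.mp (Finset.mem_range.mp hk)
    rw [Nat.cast_sub hkq, hW_def]
    ring
  have hsum : (∑ k₁ ∈ Finset.range (q + 1),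
        (((k₁ : ℂ) * ((3 - t) / 2) + ((q - k₁ : ℕ) : ℂ) * ((3 + t) / 2) + 2 + (B : ℂ))
          * (((k₁ : ℂ) * ((3 - t) / 2) + ((q - k₁ : ℕ) : ℂ) * ((3 + t) / 2) + 2 + (B : ℂ))
            - 1) / 2))
      = ((q : ℂ) + 1) / 2
          * ((B : ℂ) ^ 2 + 3 * ((q : ℂ) + 1) * (B : ℂ) + 2 * ((q : ℂ) + 1) ^ 2) := by
    rw [Finset.sum_congr rfl hterm]
    rw [Finset.sum_add_distrib, Finset.sum_add_distrib, Finset.sum_const, Finset.card_range,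
      ← Finset.mul_sum, ← Finset.mul_sum, sumC1 q, sumC2 q, nsmul_eq_mul, hW_def]
    push_cast
    linear_combination ((q : ℂ) * ((q : ℂ) + 1) * ((q : ℂ) + 2) / 24) * ht
  refine ⟨hsum, ?_⟩
  have hdvd : 2 ∣ (q + 1) * (B ^ 2 + 3 * (q + 1) * B + 2 * (q + 1) ^ 2) := by
    have h : ((((q + 1) * (B ^ 2 + 3 * (q + 1) * B + 2 * (q + 1) ^ 2) : ℕ)) : ZMod 2) = 0 := by
      push_cast
      generalize (q : ZMod 2) = x
      generalize (B : ZMod 2) = y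
      revert x y
      decide
    exact (ZMod.natCast_eq_zero_iff _ _).mp h
  obtain ⟨m, hm⟩ := hdvd
  refine ⟨m, ?_⟩
  rw [hsum]
  have hm' := congrArg (fun n : ℕ => (n : ℂ)) hm
  push_cast at hm'
  linear_combination hm' / 2
end
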